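/- If F is a flat of a q-matroid, then cyc(F) is a cyclic flat. -/

import Mathlib

open Module Submodule

variable {K E : Type*} [Field K] [Fintype K] [AddCommGroup E] [Module K E]
  [FiniteDimensional K E]

/-- The dimension of a subspace, as an integer. -/
noncomputable def dimz {K E : Type*} [Field K] [AddCommGroup E] [Module K E]
    (A : Submodule K E) : ℤ :=
  (Module.finrank K ↥A : ℤ)

/-- `r` is the rank function of a `q`-matroid on `E`: axioms (R1)-(R3). -/
def QMat {K E : Type*} [Field K] [AddCommGroup E] [Module K E]
    (r : Submodule K E → ℤ) : Prop :=
  (∀ A : Submodule K E, 0 ≤ r A ∧ r A ≤ dimz A) ∧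
  (∀ A B : Submodule K E, A ≤ B → r A ≤ r B) ∧
  (∀ A B : Submodule K E, r (A ⊔ B) + r (A ⊓ B) ≤ r A + r B)

/-- A subspace is cyclic: every codimension-1 subspace has the same rank. -/
def QCyclic {K E : Type*} [Field K] [AddCommGroup E] [Module K E]
    (r : Submodule K E → ℤ) (A : Submodule K E) : Prop :=
  ∀ B ≤ A, Module.finrank K ↥A = Module.finrank K ↥B + 1 → r B = r A

/-- The cyclic operator: sum of all one-dimensional `x ≤ A` with
`r (B ⊔ x) = r B` for all codimension-1 subspaces `B` of `A`. -/
noncomputable def qcyc {K E : Type*} [Field K] [AddCommGroup E] [Module K E]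
    (r : Submodule K E → ℤ) (A : Submodule K E) : Submodule K E :=
  sSup {x : Submodule K E | x ≤ A ∧ Module.finrank K ↥x = 1 ∧
    ∀ B ≤ A, Module.finrank K ↥A = Module.finrank K ↥B + 1 → r (B ⊔ x) = r B}

/-- The closure operator: sum of all one-dimensional `x` with `r (A ⊔ x) = r A`. -/
noncomputable def qcl {K E : Type*} [Field K] [AddCommGroup E] [Module K E]
    (r : Submodule K E → ℤ) (A : Submodule K E) : Submodule K E :=
  sSup {x : Submodule K E | Module.finrank K ↥x = 1 ∧ r (A ⊔ x) = r A}

/-- A subspace `F` is a flat: adding any one-dimensional space outside `F`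
increases the rank. -/
def QFlat {K E : Type*} [Field K] [AddCommGroup E] [Module K E]
    (r : Submodule K E → ℤ) (F : Submodule K E) : Prop :=
  ∀ x : Submodule K E, Module.finrank K ↥x = 1 → ¬ x ≤ F → r F < r (F ⊔ x)

/-! The nullity `dim A - r A` is monotone and, by submodularity, supermodular. The cyclic core
of `A` is the intersection of the hyperplanes `H` of `A` with `r H < r A`, and each of these has
the nullity of `A`; by supermodularity a minimal subspace of `A` with that nullity lies in all of
them, so `cyc A` has the nullity of `A` as well. A hyperplane of `cyc A` of smaller rank would have
larger nullity and extend to such a hyperplane of `A` not containing `cyc A`; and a line `x`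
with `r (cyc F ⊔ x) = r (cyc F)` raises the nullity, which is impossible inside a flat `F` and,
by supermodularity, also outside it. -/

section

omit [Fintype K] [FiniteDimensional K E]

theorem inf_eq_bot_of_finrank_eq_one {x B : Submodule K E} (hx : finrank K x = 1)
    (h : ¬ x ≤ B) : x ⊓ B = ⊥ :=
  disjoint_iff.mp ((isAtom_iff_finrank_eq_one.mpr hx).not_le_iff_disjoint.mp h)

theorem exists_finrank_eq_one_le_not_le {A B : Submodule K E} (h : ¬ A ≤ B) :
    ∃ x : Submodule K E, finrank K x = 1 ∧ x ≤ A ∧ ¬ x ≤ B := by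
  obtain ⟨a, haA, haB⟩ := SetLike.not_le_iff_exists.mp h
  have ha : a ≠ 0 := fun h0 => haB (h0 ▸ B.zero_mem)
  exact ⟨K ∙ a, finrank_span_singleton ha, (span_singleton_le_iff_mem _ _).mpr haA,
    fun hle => haB (hle (mem_span_singleton_self a))⟩

theorem le_sSup_of_forall_finrank_eq_one {C : Submodule K E} {S : Set (Submodule K E)}
    (h : ∀ x ≤ C, finrank K x = 1 → x ∈ S) : C ≤ sSup S := by
  by_contra hC
  obtain ⟨x, hx, hxC, hxS⟩ := exists_finrank_eq_one_le_not_le hC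
  exact hxS (le_sSup (h x hxC hx))

theorem exists_inf_eq_bot_sup_eq {B A : Submodule K E} (h : B ≤ A) :
    ∃ W, B ⊓ W = ⊥ ∧ B ⊔ W = A := by
  obtain ⟨W, hW⟩ := Submodule.exists_isCompl B
  refine ⟨W ⊓ A, eq_bot_mono (inf_le_inf_left B inf_le_left) hW.inf_eq_bot, ?_⟩
  rw [← sup_inf_assoc_of_le W h, hW.sup_eq_top, top_inf_eq]

variable {r : Submodule K E → ℤ}

theorem QMat.rank_nonneg (hM : QMat r) (A : Submodule K E) : 0 ≤ r A := (hM.1 A).1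

theorem QMat.rank_le_dimz (hM : QMat r) (A : Submodule K E) : r A ≤ dimz A := (hM.1 A).2

theorem QMat.rank_mono (hM : QMat r) {A B : Submodule K E} (h : A ≤ B) : r A ≤ r B :=
  hM.2.1 A B h

theorem QMat.rank_sup_add_rank_inf_le (hM : QMat r) (A B : Submodule K E) :
    r (A ⊔ B) + r (A ⊓ B) ≤ r A + r B :=
  hM.2.2 A B

noncomputable def qnullity (r : Submodule K E → ℤ) (A : Submodule K E) : ℤ := dimz A - r A

theorem qcyc_le (r : Submodule K E → ℤ) (A : Submodule K E) : qcyc r A ≤ A :=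
  sSup_le fun _ hx => hx.1

end

section

omit [Fintype K]

variable {r : Submodule K E → ℤ}

theorem finrank_sup_of_finrank_eq_one {x B : Submodule K E} (hx : finrank K x = 1)
    (h : ¬ x ≤ B) : finrank K ↥(B ⊔ x) = finrank K B + 1 := by
  have := finrank_sup_add_finrank_inf_eq B x
  rw [inf_comm, inf_eq_bot_of_finrank_eq_one hx h, finrank_bot] at this
  omega

theorem sup_eq_of_finrank_eq_add_one {H A x : Submodule K E} (hHA : H ≤ A)
    (hfr : finrank K A = finrank K H + 1) (hx : finrank K x = 1) (hxA : x ≤ A)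
    (hxH : ¬ x ≤ H) : H ⊔ x = A :=
  eq_of_le_of_finrank_le (sup_le hHA hxA) (by rw [finrank_sup_of_finrank_eq_one hx hxH, hfr])

theorem exists_hyperplane_le_not_le {C A x : Submodule K E} (hCA : C ≤ A)
    (hx : finrank K x = 1) (hxA : x ≤ A) (hxC : ¬ x ≤ C) :
    ∃ H, C ≤ H ∧ H ≤ A ∧ finrank K A = finrank K H + 1 ∧ ¬ x ≤ H := by
  -- `C ⊔ W` for a complement `W` of `C ⊔ x` inside `A`
  obtain ⟨W, hW, hCxW⟩ := exists_inf_eq_bot_sup_eq (sup_le hCA hxA)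
  have hA : C ⊔ W ⊔ x = A := by rw [sup_right_comm, hCxW]
  have hdimA := finrank_sup_add_finrank_inf_eq (C ⊔ x) W
  rw [hW, hCxW, finrank_bot, finrank_sup_of_finrank_eq_one hx hxC] at hdimA
  have hdimH := finrank_add_le_finrank_add_finrank C W
  have hdimA' := finrank_add_le_finrank_add_finrank (C ⊔ W) x
  rw [hA, hx] at hdimA'
  refine ⟨C ⊔ W, le_sup_left, hA ▸ le_sup_left, by omega, fun hxH => ?_⟩
  rw [sup_eq_left.mpr hxH] at hA
  rw [hA] at hdimH
  omega

theorem dimz_sup_add_dimz_inf (A B : Submodule K E) :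
    dimz (A ⊔ B) + dimz (A ⊓ B) = dimz A + dimz B := by
  unfold dimz
  exact_mod_cast finrank_sup_add_finrank_inf_eq A B

theorem QMat.qnullity_mono (hM : QMat r) {B A : Submodule K E} (h : B ≤ A) :
    qnullity r B ≤ qnullity r A := by
  obtain ⟨W, hW, hBW⟩ := exists_inf_eq_bot_sup_eq h
  have hr := hM.rank_sup_add_rank_inf_le B W
  have hd := dimz_sup_add_dimz_inf B W
  rw [hW, hBW] at hr hd
  have := hM.rank_nonneg ⊥
  have := hM.rank_le_dimz W
  have : dimz (⊥ : Submodule K E) = 0 := by simp [dimz]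
  unfold qnullity
  omega

theorem QMat.qnullity_add_qnullity_le (hM : QMat r) (A B : Submodule K E) :
    qnullity r A + qnullity r B ≤ qnullity r (A ⊔ B) + qnullity r (A ⊓ B) := by
  have := hM.rank_sup_add_rank_inf_le A B
  have := dimz_sup_add_dimz_inf A B
  unfold qnullity
  omega

theorem qcyc_le_of_rank_lt {H A : Submodule K E} (hHA : H ≤ A)
    (hfr : finrank K A = finrank K H + 1) (hr : r H < r A) : qcyc r A ≤ H :=
  sSup_le fun x ⟨hxA, hx, hcyc⟩ => by
    by_contra hxH
    have := hcyc H hHA hfr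
    rw [sup_eq_of_finrank_eq_add_one hHA hfr hx hxA hxH] at this
    omega

theorem QMat.le_qcyc (hM : QMat r) {C A : Submodule K E} (hCA : C ≤ A)
    (h : ∀ H ≤ A, finrank K A = finrank K H + 1 → r H < r A → C ≤ H) : C ≤ qcyc r A :=
  le_sSup_of_forall_finrank_eq_one fun x hxC hx => by
    refine ⟨hxC.trans hCA, hx, fun B hBA hfr => ?_⟩
    by_cases hxB : x ≤ B
    · rw [sup_eq_left.mpr hxB]
    · rw [sup_eq_of_finrank_eq_add_one hBA hfr hx (hxC.trans hCA) hxB]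
      exact le_antisymm (not_lt.mp fun hlt => hxB (hxC.trans (h B hBA hfr hlt)))
        (hM.rank_mono hBA)

theorem QMat.qnullity_le_qnullity_qcyc (hM : QMat r) (A : Submodule K E) :
    qnullity r A ≤ qnullity r (qcyc r A) := by
  obtain ⟨C, ⟨hCA, hC⟩, hmin⟩ := wellFounded_lt.has_min
    {C | C ≤ A ∧ qnullity r A ≤ qnullity r C} ⟨A, le_rfl, le_rfl⟩
  refine hC.trans (hM.qnullity_mono (hM.le_qcyc hCA fun H hHA hfr hr => ?_))
  -- `C ⊓ H` keeps the nullity of `A` by supermodularity, so minimality of `C` forces `C ≤ H`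
  have hH : qnullity r A ≤ qnullity r H := by simp only [qnullity, dimz]; omega
  have hsup := hM.qnullity_mono (sup_le hCA hHA)
  have hinf := hM.qnullity_add_qnullity_le C H
  by_contra hCH
  exact hmin (C ⊓ H) ⟨inf_le_left.trans hCA, by omega⟩ (inf_lt_left.mpr hCH)

theorem QMat.qcyc_cyclic (hM : QMat r) (A : Submodule K E) : QCyclic r (qcyc r A) := by
  intro B hBD hfr
  refine le_antisymm (hM.rank_mono hBD) (not_lt.mp fun hlt => ?_)
  have hDB : ¬ qcyc r A ≤ B := fun h => by
    have := finrank_mono h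
    omega
  obtain ⟨x, hx, hxD, hxB⟩ := exists_finrank_eq_one_le_not_le hDB
  obtain ⟨H, hBH, hHA, hfrH, hxH⟩ := exists_hyperplane_le_not_le
    (hBD.trans (qcyc_le r A)) hx (hxD.trans (qcyc_le r A)) hxB
  have hB := hM.qnullity_mono hBH
  have hD := hM.qnullity_le_qnullity_qcyc A
  have hrH : r H < r A := by simp only [qnullity, dimz] at hB hD; omega
  exact hxH (hxD.trans (qcyc_le_of_rank_lt hHA hfrH hrH))

theorem QMat.qcyc_flat (hM : QMat r) {F : Submodule K E} (hF : QFlat r F) :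
    QFlat r (qcyc r F) := by
  intro x hx hxD
  set D := qcyc r F
  refine not_le.mp fun hle => ?_
  have hDx : qnullity r D + 1 ≤ qnullity r (D ⊔ x) := by
    have := finrank_sup_of_finrank_eq_one hx hxD
    simp only [qnullity, dimz]
    omega
  have hD : qnullity r F ≤ qnullity r D := hM.qnullity_le_qnullity_qcyc F
  by_cases hxF : x ≤ F
  · have : qnullity r (D ⊔ x) ≤ qnullity r F := hM.qnullity_mono (sup_le (qcyc_le r F) hxF)
    omega
  · have hFx : qnullity r (F ⊔ x) ≤ qnullity r F := by
      have := hF x hx hxF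
      have := finrank_sup_of_finrank_eq_one hx hxF
      simp only [qnullity, dimz]
      omega
    have hsup : F ⊔ (D ⊔ x) = F ⊔ x := by rw [← sup_assoc, sup_eq_left.mpr (qcyc_le r F)]
    have hinf : F ⊓ (D ⊔ x) = D := by
      rw [inf_comm, sup_inf_assoc_of_le x (qcyc_le r F), inf_eq_bot_of_finrank_eq_one hx hxF,
        sup_bot_eq]
    have := hM.qnullity_add_qnullity_le F (D ⊔ x)
    rw [hsup, hinf] at this
    omega

end

/-- the cyclic core of a flat is a cyclic flat. -/
theorem qcyc_of_flat_is_cyclic_flat (r : Submodule K E → ℤ) (hM : QMat r)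
    (F : Submodule K E) (hF : QFlat r F) :
    QFlat r (qcyc r F) ∧ QCyclic r (qcyc r F) :=
  ⟨hM.qcyc_flat hF, hM.qcyc_cyclic F⟩
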